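/- arXiv:2506.07377 — 3 statements merged into one kernel-verified Lean document; each statement's English description precedes it below -/
import Mathlib

section
/- Fix p ∈ (1,∞), a sequence s : {1,2,...} → ℕ with s_k ≥ 1 such that M_p(1,s) > 0 (where 1 denotes the constant weight sequence equal to 1), and constants 0 < α₁ ≤ α₂. Then for all weight sequences σ, σ̂ : {1,2,...} → ℝ with α₁ ≤ σ_k ≤ α₂ and α₁ ≤ σ̂_k ≤ α₂ for all k, |M_p(σ̂,s) − M_p(σ,s)| ≤ (α₂/α₁)·M_p(1,s)·sup_{k≥1} |σ̂_k − σ_k|; that is, σ ↦ M_p(σ,s) is Lipschitz continuous on {σ : α₁ ≤ σ ≤ α₂} with respect to the supremum norm. -/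
open scoped ENNReal NNReal

/-- The radially symmetric `p`-modulus `M_p(σ, s)` of the family of infinite
descending paths in a radially symmetric infinite tree whose `k`-th shell has
`s k` edges, each of weight `σ k`: the infimum of the `p`-energies
`Σ_k s_k σ_k ρ_k^p` over all densities `ρ` with `Σ_k ρ_k ≥ 1`. -/
noncomputable def Mmod (p : ℝ) (σ : ℕ → ℝ≥0) (s : ℕ → ℕ) : ℝ≥0∞ :=
  ⨅ ρ ∈ {ρ : ℕ → ℝ≥0 | 1 ≤ ∑' k : ℕ, (ρ k : ℝ≥0∞)},
    ∑' k : ℕ, (s k : ℝ≥0∞) * (σ k : ℝ≥0∞) * (ρ k : ℝ≥0∞) ^ p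

lemma Mmod_le_energy (p : ℝ) (σ : ℕ → ℝ≥0) (s : ℕ → ℕ) {ρ : ℕ → ℝ≥0}
    (hρ : 1 ≤ ∑' k : ℕ, (ρ k : ℝ≥0∞)) :
    Mmod p σ s ≤ ∑' k : ℕ, (s k : ℝ≥0∞) * (σ k : ℝ≥0∞) * (ρ k : ℝ≥0∞) ^ p :=
  iInf₂_le ρ hρ

lemma Mmod_le_mul (p : ℝ) (s : ℕ → ℕ) (σ σh : ℕ → ℝ≥0) (c : ℝ≥0) (hc : c ≠ 0)
    (h : ∀ k, σh k ≤ c * σ k) :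
    Mmod p σh s ≤ (c : ℝ≥0∞) * Mmod p σ s := by
  have hc' : (c : ℝ≥0∞) ≠ 0 := by exact_mod_cast hc
  have hct : (c : ℝ≥0∞) ≠ ⊤ := ENNReal.coe_ne_top
  rw [mul_comm, ← ENNReal.div_le_iff_le_mul (Or.inl hc') (Or.inl hct)]
  rw [Mmod]
  refine le_iInf₂ fun ρ hρ => ?_
  rw [ENNReal.div_le_iff_le_mul (Or.inl hc') (Or.inl hct), mul_comm]
  calc Mmod p σh s ≤ ∑' k : ℕ, (s k : ℝ≥0∞) * (σh k : ℝ≥0∞) * (ρ k : ℝ≥0∞) ^ p :=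
        Mmod_le_energy p σh s hρ
    _ ≤ ∑' k : ℕ, (c : ℝ≥0∞) * ((s k : ℝ≥0∞) * (σ k : ℝ≥0∞) * (ρ k : ℝ≥0∞) ^ p) := by
        refine ENNReal.tsum_le_tsum fun k => ?_
        have hk : (σh k : ℝ≥0∞) ≤ (c : ℝ≥0∞) * (σ k : ℝ≥0∞) := by
          rw [← ENNReal.coe_mul]; exact_mod_cast h k
        calc (s k : ℝ≥0∞) * (σh k : ℝ≥0∞) * (ρ k : ℝ≥0∞) ^ p
            ≤ (s k : ℝ≥0∞) * ((c : ℝ≥0∞) * (σ k : ℝ≥0∞)) * (ρ k : ℝ≥0∞) ^ p := by gcongr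
          _ = (c : ℝ≥0∞) * ((s k : ℝ≥0∞) * (σ k : ℝ≥0∞) * (ρ k : ℝ≥0∞) ^ p) := by ring
    _ = (c : ℝ≥0∞) * ∑' k : ℕ, (s k : ℝ≥0∞) * (σ k : ℝ≥0∞) * (ρ k : ℝ≥0∞) ^ p :=
        ENNReal.tsum_mul_left

lemma Mmod_one_lt_top (p : ℝ) (hp : 0 < p) (s : ℕ → ℕ) :
    Mmod p (fun _ => 1) s < ⊤ := by
  set ρ : ℕ → ℝ≥0 := fun k => if k = 0 then 1 else 0 with hρdef
  have hcoe : ∀ k, ((ρ k : ℝ≥0) : ℝ≥0∞) = if k = 0 then 1 else 0 := by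
    intro k; rw [hρdef]; split_ifs with h <;> simp [h]
  have hρ : (1 : ℝ≥0∞) ≤ ∑' k : ℕ, (ρ k : ℝ≥0∞) := by
    have : ∑' k : ℕ, (ρ k : ℝ≥0∞) = 1 := by
      simp_rw [hcoe]; exact tsum_ite_eq 0 1
    rw [this]
  have hE : ∑' k : ℕ, (s k : ℝ≥0∞) * ((1 : ℝ≥0) : ℝ≥0∞) * (ρ k : ℝ≥0∞) ^ p
      = (s 0 : ℝ≥0∞) := by
    have : ∀ k, (s k : ℝ≥0∞) * ((1 : ℝ≥0) : ℝ≥0∞) * (ρ k : ℝ≥0∞) ^ p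
        = if k = 0 then (s 0 : ℝ≥0∞) else 0 := by
      intro k
      rw [hcoe]
      split_ifs with h
      · subst h; simp [ENNReal.one_rpow]
      · simp [ENNReal.zero_rpow_of_pos hp]
    simp_rw [this]; exact tsum_ite_eq 0 _
  calc Mmod p (fun _ => 1) s ≤ _ := Mmod_le_energy p (fun _ => 1) s hρ
    _ = (s 0 : ℝ≥0∞) := hE
    _ < ⊤ := ENNReal.natCast_lt_top _

/-- `σ ↦ M_p(σ, s)` is Lipschitz on `{σ : α₁ ≤ σ ≤ α₂}` for the
supremum norm, with Lipschitz constant `(α₂/α₁) M_p(1, s)`. -/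
theorem stmt17 (p : ℝ) (hp : 1 < p) (s : ℕ → ℕ) (hs : ∀ k, 1 ≤ s k)
    (hM : 0 < Mmod p (fun _ => 1) s)
    (α₁ α₂ : ℝ≥0) (hα₁ : 0 < α₁) (hα : α₁ ≤ α₂)
    (σ σh : ℕ → ℝ≥0)
    (hσ : ∀ k, α₁ ≤ σ k ∧ σ k ≤ α₂) (hσh : ∀ k, α₁ ≤ σh k ∧ σh k ≤ α₂) :
    |(Mmod p σh s).toReal - (Mmod p σ s).toReal| ≤
      ((α₂ : ℝ) / (α₁ : ℝ)) * (Mmod p (fun _ => 1) s).toReal *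
        ⨆ k : ℕ, |(σh k : ℝ) - (σ k : ℝ)| := by
  have hp0 : 0 < p := lt_trans one_pos hp
  set M1 := Mmod p (fun _ => 1) s with hM1def
  have hM1top : M1 ≠ ⊤ := (Mmod_one_lt_top p hp0 s).ne
  have hα₁ne : α₁ ≠ 0 := hα₁.ne'
  have hα₂ne : α₂ ≠ 0 := (lt_of_lt_of_le hα₁ hα).ne'
  set D : ℝ≥0 := ⨆ k, nndist (σh k) (σ k) with hD
  have hbdd : BddAbove (Set.range fun k => nndist (σh k) (σ k)) := by
    refine ⟨α₂, ?_⟩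
    rintro x ⟨k, rfl⟩
    dsimp only
    rw [NNReal.nndist_eq]
    exact max_le (le_trans tsub_le_self (hσh k).2) (le_trans tsub_le_self (hσ k).2)
  set B : ℝ≥0∞ := ((D / α₁ * α₂ : ℝ≥0) : ℝ≥0∞) * M1 with hB
  have hBtop : B ≠ ⊤ := ENNReal.mul_ne_top ENNReal.coe_ne_top hM1top
  -- the one-sided key estimate
  have hkey : ∀ τ τh : ℕ → ℝ≥0, (∀ k, α₁ ≤ τ k ∧ τ k ≤ α₂) →
      (∀ k, α₁ ≤ τh k ∧ τh k ≤ α₂) → (∀ k, nndist (τh k) (τ k) ≤ D) →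
      Mmod p τh s ≤ Mmod p τ s + B := by
    intro τ τh hτ hτh hd
    have hτM : Mmod p τ s ≤ (α₂ : ℝ≥0∞) * M1 := by
      refine Mmod_le_mul p s _ τ α₂ hα₂ne fun k => ?_
      rw [mul_one]; exact (hτ k).2
    have hmul : Mmod p τh s ≤ ((1 + D / α₁ : ℝ≥0) : ℝ≥0∞) * Mmod p τ s := by
      refine Mmod_le_mul p s τ τh (1 + D / α₁) (by positivity) fun k => ?_
      have h1 : τh k ≤ τ k + nndist (τh k) (τ k) := by
        rw [NNReal.nndist_eq]
        calc τh k ≤ τ k + (τh k - τ k) := le_add_tsub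
          _ ≤ τ k + max (τh k - τ k) (τ k - τh k) := by gcongr; exact le_max_left _ _
      have h2 : τ k + D ≤ (1 + D / α₁) * τ k := by
        rw [add_mul, one_mul]
        gcongr
        calc D = D / α₁ * α₁ := (div_mul_cancel₀ D hα₁ne).symm
          _ ≤ D / α₁ * τ k := by gcongr; exact (hτ k).1
      exact le_trans (le_trans h1 (by gcongr; exact hd k)) h2
    calc Mmod p τh s ≤ ((1 + D / α₁ : ℝ≥0) : ℝ≥0∞) * Mmod p τ s := hmul
      _ = Mmod p τ s + ((D / α₁ : ℝ≥0) : ℝ≥0∞) * Mmod p τ s := by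
          rw [ENNReal.coe_add, ENNReal.coe_one, add_mul, one_mul]
      _ ≤ Mmod p τ s + ((D / α₁ : ℝ≥0) : ℝ≥0∞) * ((α₂ : ℝ≥0∞) * M1) := by gcongr
      _ = Mmod p τ s + B := by
          rw [hB, ENNReal.coe_mul, mul_assoc]
  have hσtop : Mmod p σ s ≠ ⊤ := by
    refine ne_top_of_le_ne_top (ENNReal.mul_ne_top ENNReal.coe_ne_top hM1top)
      (Mmod_le_mul p s _ σ α₂ hα₂ne fun k => ?_)
    rw [mul_one]; exact (hσ k).2
  have hσhtop : Mmod p σh s ≠ ⊤ := by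
    refine ne_top_of_le_ne_top (ENNReal.mul_ne_top ENNReal.coe_ne_top hM1top)
      (Mmod_le_mul p s _ σh α₂ hα₂ne fun k => ?_)
    rw [mul_one]; exact (hσh k).2
  have h1 : Mmod p σh s ≤ Mmod p σ s + B :=
    hkey σ σh hσ hσh fun k => le_ciSup hbdd k
  have h2 : Mmod p σ s ≤ Mmod p σh s + B :=
    hkey σh σ hσh hσ fun k => by rw [nndist_comm]; exact le_ciSup hbdd k
  have habs : |(Mmod p σh s).toReal - (Mmod p σ s).toReal| ≤ B.toReal := by
    rw [abs_sub_le_iff]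
    constructor
    · have := ENNReal.toReal_mono (ENNReal.add_ne_top.2 ⟨hσtop, hBtop⟩) h1
      rw [ENNReal.toReal_add hσtop hBtop] at this
      linarith
    · have := ENNReal.toReal_mono (ENNReal.add_ne_top.2 ⟨hσhtop, hBtop⟩) h2
      rw [ENNReal.toReal_add hσhtop hBtop] at this
      linarith
  refine le_trans habs (le_of_eq ?_)
  have hsup : (⨆ k : ℕ, |(σh k : ℝ) - (σ k : ℝ)|) = (D : ℝ) := by
    rw [hD, NNReal.coe_iSup]
    exact iSup_congr fun k => by rw [coe_nndist, NNReal.dist_eq]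
  rw [hsup, hB, ENNReal.toReal_mul, ENNReal.coe_toReal, NNReal.coe_mul, NNReal.coe_div]
  try ring
end

section
/- For every r ∈ (1,∞) there exists a sequence s : {1,2,...} → ℕ with s_1 ∈ {1,2} and s_{k+1} ∈ {s_k, 2·s_k} for all k ≥ 1 (the shell sizes of an unweighted 1-2 radially symmetric tree), such that for every p ∈ (1,∞): the series Σ_{k≥1} s_k^{-1/(p−1)} converges if and only if p < r. Consequently, M_p(1,s) > 0 if and only if 1 < p < r, so the critical exponent p_c := sup{ p > 1 : M_p(1,s) > 0 } equals r. (One may take s determined by the skip sequence c_k = ⌈2^{k/(r−1)}⌉.) -/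
/-!
Hölder's inequality, together with the extremal density `ρ_k ∝ s_k^{-1/(p-1)}`, gives
`M_p(1, s) = (Σ_k s_k^{-1/(p-1)})^{1-p}`, so the modulus is positive exactly when this series
converges. For the tree take `s_k` to be the largest power of two below `z_k = (1 + a k)^(r-1)`,
where `(1 + a)^(r-1) = 2`: then `z_k ≤ z_{k+1} ≤ 2 z_k`, so consecutive shells differ by a factor
one or two, and `s_k ≤ z_k < 2 s_k`, so the series behaves like `Σ_k k^{-(r-1)/(p-1)}`, which
converges iff `p < r`.
-/

open scoped ENNReal NNReal

open Real

theorem Mmod_le_of_one_le_tsum (p : ℝ) (σ : ℕ → ℝ≥0) (s : ℕ → ℕ) {ρ : ℕ → ℝ≥0∞}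
    (hρ : ∀ k, ρ k ≠ ⊤) (h : 1 ≤ ∑' k, ρ k) :
    Mmod p σ s ≤ ∑' k, (s k : ℝ≥0∞) * σ k * ρ k ^ p := by
  unfold Mmod
  refine (iInf₂_le (fun k => (ρ k).toNNReal) ?_).trans_eq ?_ <;>
    simp only [Set.mem_ofPred_eq, ENNReal.coe_toNNReal (hρ _), h]

theorem ENNReal.tsum_mul_le_Lp_mul_Lq {ι : Type*} (f g : ι → ℝ≥0∞) {p q : ℝ}
    (hpq : p.HolderConjugate q) :
    ∑' i, f i * g i ≤ (∑' i, f i ^ p) ^ (1 / p) * (∑' i, g i ^ q) ^ (1 / q) := by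
  rw [ENNReal.tsum_eq_iSup_sum]
  refine iSup_le fun t => (ENNReal.inner_le_Lp_mul_Lq t f g hpq).trans ?_
  have := hpq.pos; have := hpq.symm.pos
  gcongr <;> exact ENNReal.sum_le_tsum t

theorem ENNReal.mul_rpow_neg_one_div_sub_one_rpow {x : ℝ≥0∞} (hx₀ : x ≠ 0) (hx : x ≠ ⊤)
    {p : ℝ} (hp : p ≠ 1) :
    x * (x ^ (-(1 / (p - 1)))) ^ p = x ^ (-(1 / (p - 1))) := by
  have : p - 1 ≠ 0 := sub_ne_zero.mpr hp
  rw [← ENNReal.rpow_mul]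
  nth_rw 1 [← ENNReal.rpow_one x]
  rw [← ENNReal.rpow_add _ _ hx₀ hx]
  congr 1
  field_simp
  ring

section Modulus

variable {p : ℝ} {s : ℕ → ℕ}

theorem one_le_tsum_rpow_mul_tsum_of_one_le_tsum (hp : 1 < p) (hs : ∀ k, s k ≠ 0)
    {ρ : ℕ → ℝ≥0∞} (hρ : 1 ≤ ∑' k, ρ k) :
    1 ≤ (∑' k, (s k : ℝ≥0∞) ^ (-(1 / (p - 1)))) ^ (p - 1) * ∑' k, (s k : ℝ≥0∞) * ρ k ^ p := by
  have hp₀ : 0 < p := by linarith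
  have hs' : ∀ k, (s k : ℝ≥0∞) ≠ 0 := fun k => Nat.cast_ne_zero.mpr (hs k)
  set T := ∑' k, (s k : ℝ≥0∞) ^ (-(1 / (p - 1)))
  set E := ∑' k, (s k : ℝ≥0∞) * ρ k ^ p
  have hE : ∑' k, ((s k : ℝ≥0∞) ^ (1 / p) * ρ k) ^ p = E := by
    refine tsum_congr fun k => ?_
    rw [ENNReal.mul_rpow_of_nonneg _ _ hp₀.le, ← ENNReal.rpow_mul, one_div_mul_cancel hp₀.ne',
      ENNReal.rpow_one]
  have hT : ∑' k, ((s k : ℝ≥0∞) ^ (-(1 / p))) ^ (p / (p - 1)) = T := by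
    refine tsum_congr fun k => ?_
    rw [← ENNReal.rpow_mul]
    congr 1
    field_simp
  have holder : 1 ≤ E ^ (1 / p) * T ^ (1 / (p / (p - 1))) :=
    calc 1 ≤ ∑' k, ρ k := hρ
      _ = ∑' k, (s k : ℝ≥0∞) ^ (1 / p) * ρ k * (s k : ℝ≥0∞) ^ (-(1 / p)) := by
          refine tsum_congr fun k => ?_
          rw [mul_right_comm, ← ENNReal.rpow_add _ _ (hs' k) (ENNReal.natCast_ne_top _),
            add_neg_cancel, ENNReal.rpow_zero, one_mul]
      _ ≤ E ^ (1 / p) * T ^ (1 / (p / (p - 1))) := by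
          rw [← hE, ← hT]
          exact ENNReal.tsum_mul_le_Lp_mul_Lq _ _ (Real.HolderConjugate.conjExponent hp)
  calc 1 ≤ (E ^ (1 / p) * T ^ (1 / (p / (p - 1)))) ^ p := by
        simpa using ENNReal.rpow_le_rpow holder hp₀.le
    _ = T ^ (p - 1) * E := by
        rw [ENNReal.mul_rpow_of_nonneg _ _ hp₀.le, ← ENNReal.rpow_mul, ← ENNReal.rpow_mul,
          one_div_mul_cancel hp₀.ne', ENNReal.rpow_one, mul_comm]
        congr 2
        field_simp

theorem rpow_one_sub_tsum_le_Mmod (hp : 1 < p) (hs : ∀ k, s k ≠ 0) :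
    (∑' k, (s k : ℝ≥0∞) ^ (-(1 / (p - 1)))) ^ (1 - p) ≤ Mmod p (fun _ => 1) s := by
  set T := ∑' k, (s k : ℝ≥0∞) ^ (-(1 / (p - 1)))
  have hT : T ≠ 0 :=
    ((ENNReal.rpow_pos (Nat.cast_pos.2 (Nat.pos_of_ne_zero (hs 0))) (ENNReal.natCast_ne_top _)
      ).trans_le (ENNReal.le_tsum (f := fun k => (s k : ℝ≥0∞) ^ (-(1 / (p - 1)))) 0)).ne'
  refine le_iInf₂ fun ρ (hρ : 1 ≤ ∑' k, (ρ k : ℝ≥0∞)) => ?_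
  have h := one_le_tsum_rpow_mul_tsum_of_one_le_tsum hp hs hρ
  have hE : ∑' k, (s k : ℝ≥0∞) * (ρ k : ℝ≥0∞) ^ p ≠ 0 := by
    rintro hE
    simp [hE] at h
  simp only [ENNReal.coe_one, mul_one]
  rw [show 1 - p = -(p - 1) by ring, ENNReal.rpow_neg, ENNReal.inv_le_iff_le_mul _ fun _ => hE]
  · exact h
  · intro _
    simp [ENNReal.rpow_eq_zero_iff, hT, hp, hp.le]

theorem Mmod_le_rpow_one_sub_sum (hp : 1 < p) (hs : ∀ k, s k ≠ 0) (F : Finset ℕ) :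
    Mmod p (fun _ => 1) s ≤ (∑ k ∈ F, (s k : ℝ≥0∞) ^ (-(1 / (p - 1)))) ^ (1 - p) := by
  have hp₀ : 0 < p := by linarith
  set w : ℕ → ℝ≥0∞ := fun k => (s k : ℝ≥0∞) ^ (-(1 / (p - 1)))
  have hs' : ∀ k, (s k : ℝ≥0∞) ≠ 0 := fun k => Nat.cast_ne_zero.mpr (hs k)
  have hw : ∀ k, w k ≠ ⊤ := fun k =>
    ENNReal.rpow_ne_top_of_ne_zero (hs' k) (ENNReal.natCast_ne_top _)
  set S := ∑ k ∈ F, w k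
  have hS : S ≠ ⊤ := ENNReal.sum_ne_top.2 fun k _ => hw k
  rcases eq_or_ne S 0 with hS₀ | hS₀
  · simp [hS₀, ENNReal.zero_rpow_of_neg (by linarith : 1 - p < 0)]
  -- the extremal density, truncated to `F`
  set ρ : ℕ → ℝ≥0∞ := (F : Set ℕ).indicator fun k => w k / S
  have hρ : ∀ k ∉ F, ρ k = 0 := fun k hk => Set.indicator_of_notMem hk _
  calc Mmod p (fun _ => 1) s ≤ ∑' k, (s k : ℝ≥0∞) * ((1 : ℝ≥0) : ℝ≥0∞) * ρ k ^ p := by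
        refine Mmod_le_of_one_le_tsum _ _ _ (fun k => ?_) ?_
        · by_cases hk : k ∈ F <;> simp [ρ, hk, ENNReal.div_eq_top, hw, hS₀]
        · rw [tsum_eq_sum hρ, Finset.sum_congr rfl fun k hk =>
            Set.indicator_of_mem (Finset.mem_coe.2 hk) _]
          simp only [div_eq_mul_inv, ← Finset.sum_mul]
          exact (ENNReal.mul_inv_cancel hS₀ hS).ge
    _ = ∑ k ∈ F, w k / S ^ p := by
        rw [tsum_eq_sum fun k hk => by simp [hρ k hk, ENNReal.zero_rpow_of_pos hp₀]]
        refine Finset.sum_congr rfl fun k hk => ?_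
        simp only [ρ, Set.indicator_of_mem (Finset.mem_coe.2 hk), ENNReal.coe_one, mul_one,
          ENNReal.div_rpow_of_nonneg _ _ hp₀.le, ← mul_div_assoc]
        rw [ENNReal.mul_rpow_neg_one_div_sub_one_rpow (hs' k) (ENNReal.natCast_ne_top _) hp.ne']
    _ = S ^ (1 - p) := by
        simp only [div_eq_mul_inv]
        rw [← Finset.sum_mul, ← div_eq_mul_inv, ENNReal.rpow_sub _ _ hS₀ hS, ENNReal.rpow_one]

theorem Mmod_one_eq (hp : 1 < p) (hs : ∀ k, s k ≠ 0) :
    Mmod p (fun _ => 1) s = (∑' k, (s k : ℝ≥0∞) ^ (-(1 / (p - 1)))) ^ (1 - p) := by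
  refine le_antisymm ?_ (rpow_one_sub_tsum_le_Mmod hp hs)
  exact ge_of_tendsto' ((ENNReal.continuous_rpow_const.tendsto _).comp
    (ENNReal.tendsto_nat_tsum _)) fun n => Mmod_le_rpow_one_sub_sum hp hs (Finset.range n)

theorem Mmod_one_pos_iff (hp : 1 < p) (hs : ∀ k, s k ≠ 0) :
    0 < Mmod p (fun _ => 1) s ↔ ∑' k, (s k : ℝ≥0∞) ^ (-(1 / (p - 1))) ≠ ⊤ := by
  simp [Mmod_one_eq hp hs, pos_iff_ne_zero, ENNReal.rpow_eq_zero_iff, hp.le, not_le.2 hp]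

end Modulus

theorem ENNReal.tsum_natCast_rpow_ne_top_iff {ι : Type*} {s : ι → ℕ} (hs : ∀ i, s i ≠ 0) (y : ℝ) :
    ∑' i, (s i : ℝ≥0∞) ^ y ≠ ⊤ ↔ Summable fun i => (s i : ℝ) ^ y := by
  have hcoe : ∀ i, (s i : ℝ≥0∞) ^ y = (((s i : ℝ≥0) ^ y : ℝ≥0) : ℝ≥0∞) := fun i => by
    rw [ENNReal.coe_rpow_of_ne_zero (Nat.cast_ne_zero.2 (hs i)), ENNReal.coe_natCast]
  simp_rw [hcoe, ENNReal.tsum_coe_ne_top_iff_summable, ← NNReal.summable_coe, NNReal.coe_rpow,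
    NNReal.coe_natCast]

theorem summable_rpow_neg_iff_of_le_of_le_two_mul {ι : Type*} {u v : ι → ℝ} (hu : ∀ i, 0 < u i)
    (huv : ∀ i, u i ≤ v i) (hvu : ∀ i, v i ≤ 2 * u i) {q : ℝ} (hq : 0 ≤ q) :
    (Summable fun i => u i ^ (-q)) ↔ Summable fun i => v i ^ (-q) := by
  have hv : ∀ i, 0 < v i := fun i => (hu i).trans_le (huv i)
  refine ⟨fun h => h.of_nonneg_of_le (fun i => (rpow_pos_of_pos (hv i) _).le)
    fun i => rpow_le_rpow_of_nonpos (hu i) (huv i) (neg_nonpos.2 hq), fun h => ?_⟩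
  refine (h.mul_left (2 ^ q)).of_nonneg_of_le (fun i => (rpow_pos_of_pos (hu i) _).le) fun i => ?_
  calc u i ^ (-q) = 2 ^ q * (2 * u i) ^ (-q) := by
        rw [mul_rpow zero_le_two (hu i).le, ← mul_assoc, ← rpow_add two_pos, add_neg_cancel,
          rpow_zero, one_mul]
    _ ≤ 2 ^ q * v i ^ (-q) := mul_le_mul_of_nonneg_left
        (rpow_le_rpow_of_nonpos (hv i) (hvu i) (neg_nonpos.2 hq)) (rpow_nonneg zero_le_two q)

theorem summable_one_add_mul_rpow_neg_iff {a : ℝ} (ha : 0 < a) {t : ℝ} :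
    (Summable fun k : ℕ => (1 + a * k) ^ (-t)) ↔ 1 < t := by
  rw [← Real.summable_one_div_nat_add_rpow a⁻¹ t,
    ← summable_mul_left_iff (rpow_pos_of_pos ha t).ne']
  refine summable_congr fun k => ?_
  have hk : 0 < (k : ℝ) + a⁻¹ := by positivity
  rw [abs_of_pos hk, one_div, ← rpow_neg hk.le,
    show 1 + a * k = a * (k + a⁻¹) by field_simp; ring, mul_rpow ha.le hk.le, ← mul_assoc,
    ← rpow_add ha, add_neg_cancel, rpow_zero, one_mul]

-- the largest power of two that is at most `z`, when `1 ≤ z`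
noncomputable def dyadicFloor (z : ℝ) : ℕ := 2 ^ ⌊logb 2 z⌋₊

theorem dyadicFloor_pos (z : ℝ) : 0 < dyadicFloor z := Nat.two_pow_pos _

theorem dyadicFloor_one : dyadicFloor 1 = 1 := by simp [dyadicFloor]

theorem dyadicFloor_le {z : ℝ} (hz : 1 ≤ z) : (dyadicFloor z : ℝ) ≤ z :=
  calc (dyadicFloor z : ℝ) = 2 ^ (⌊logb 2 z⌋₊ : ℝ) := by simp [dyadicFloor]
    _ ≤ 2 ^ logb 2 z :=
        rpow_le_rpow_of_exponent_le one_le_two (Nat.floor_le (logb_nonneg one_lt_two hz))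
    _ = z := rpow_logb two_pos (by norm_num) (by linarith)

theorem lt_two_mul_dyadicFloor {z : ℝ} (hz : 0 < z) : z < 2 * dyadicFloor z :=
  calc z = 2 ^ logb 2 z := (rpow_logb two_pos (by norm_num) hz).symm
    _ < 2 ^ ((⌊logb 2 z⌋₊ : ℝ) + 1) :=
        rpow_lt_rpow_of_exponent_lt one_lt_two (Nat.lt_floor_add_one _)
    _ = 2 * dyadicFloor z := by
        rw [rpow_add_one two_ne_zero, rpow_natCast, mul_comm]
        simp [dyadicFloor]

theorem dyadicFloor_eq_or_eq_two_mul {a b : ℝ} (ha : 1 ≤ a) (hab : a ≤ b) (hb : b ≤ 2 * a) :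
    dyadicFloor b = dyadicFloor a ∨ dyadicFloor b = 2 * dyadicFloor a := by
  have hmono : ⌊logb 2 a⌋₊ ≤ ⌊logb 2 b⌋₊ :=
    Nat.floor_le_floor (logb_le_logb_of_le one_lt_two (by linarith) hab)
  have hstep : ⌊logb 2 b⌋₊ ≤ ⌊logb 2 a⌋₊ + 1 := by
    rw [← Nat.floor_add_one (logb_nonneg one_lt_two ha)]
    refine Nat.floor_le_floor ?_
    calc logb 2 b ≤ logb 2 (2 * a) := logb_le_logb_of_le one_lt_two (by linarith) hb
      _ = logb 2 a + 1 := by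
          rw [logb_mul two_ne_zero (by linarith), logb_self_eq_one one_lt_two, add_comm]
  rcases (by omega : ⌊logb 2 b⌋₊ = ⌊logb 2 a⌋₊ ∨ ⌊logb 2 b⌋₊ = ⌊logb 2 a⌋₊ + 1) with h | h
  · exact .inl (by rw [dyadicFloor, h, dyadicFloor])
  · exact .inr (by rw [dyadicFloor, h, dyadicFloor, pow_succ, mul_comm])

theorem exists_oneTwo_shells_summable_rpow_neg_iff {α : ℝ} (hα : 0 < α) :
    ∃ s : ℕ → ℕ, s 0 = 1 ∧ (∀ k, s (k + 1) = s k ∨ s (k + 1) = 2 * s k) ∧ (∀ k, s k ≠ 0) ∧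
      ∀ q : ℝ, 0 ≤ q → ((Summable fun k => (s k : ℝ) ^ (-q)) ↔ 1 < α * q) := by
  set a : ℝ := 2 ^ α⁻¹ - 1
  have ha : 0 < a := sub_pos.2 (one_lt_rpow one_lt_two (inv_pos.2 hα))
  set z : ℕ → ℝ := fun k => (1 + a * k) ^ α
  have hz₁ : ∀ k, 1 ≤ z k := fun k =>
    one_le_rpow (le_add_of_nonneg_right (by positivity)) hα.le
  have hz_mono : ∀ k, z k ≤ z (k + 1) := fun k => by
    refine rpow_le_rpow (by positivity) ?_ hα.le
    push_cast
    nlinarith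
  have hz_step : ∀ k, z (k + 1) ≤ 2 * z k := fun k =>
    calc z (k + 1) ≤ ((1 + a) * (1 + a * k)) ^ α := by
          refine rpow_le_rpow (by positivity) ?_ hα.le
          push_cast
          nlinarith [mul_pos ha ha, (Nat.cast_nonneg k : (0 : ℝ) ≤ k)]
      _ = 2 * z k := by
          rw [mul_rpow (by positivity) (by positivity), add_sub_cancel, ← rpow_mul zero_le_two,
            inv_mul_cancel₀ hα.ne', rpow_one]
  refine ⟨fun k => dyadicFloor (z k), by simp [z, dyadicFloor_one],
    fun k => dyadicFloor_eq_or_eq_two_mul (hz₁ k) (hz_mono k) (hz_step k),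
    fun k => (dyadicFloor_pos _).ne', fun q hq => ?_⟩
  rw [summable_rpow_neg_iff_of_le_of_le_two_mul (fun k => Nat.cast_pos.2 (dyadicFloor_pos _))
    (fun k => dyadicFloor_le (hz₁ k))
    (fun k => (lt_two_mul_dyadicFloor (zero_lt_one.trans_le (hz₁ k))).le) hq,
    ← summable_one_add_mul_rpow_neg_iff ha]
  refine summable_congr fun k => ?_
  rw [← rpow_mul (by positivity), mul_neg]

/-- for every `r ∈ (1, ∞)` there is an unweighted 1-2 radially
symmetric tree (given by its shell sizes `s`) whose modulus series
`Σ_k s_k^{-1/(p-1)}` converges iff `p < r`; consequently `M_p(1,s) > 0` iff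
`1 < p < r`, and the critical exponent equals `r`. (Here `s k` is the size of
the `(k+1)`-st shell.) -/
theorem stmt18 (r : ℝ) (hr : 1 < r) :
    ∃ s : ℕ → ℕ,
      (s 0 = 1 ∨ s 0 = 2) ∧
      (∀ k : ℕ, s (k + 1) = s k ∨ s (k + 1) = 2 * s k) ∧
      (∀ p : ℝ, 1 < p →
        ((∑' k : ℕ, (s k : ℝ≥0∞) ^ (-(1 / (p - 1)))) ≠ ⊤ ↔ p < r)) ∧
      (∀ p : ℝ, 1 < p → (0 < Mmod p (fun _ => 1) s ↔ p < r)) ∧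
      sSup {p : ℝ | 1 < p ∧ 0 < Mmod p (fun _ => 1) s} = r := by
  obtain ⟨s, hs₀, hstep, hs, hsum⟩ := exists_oneTwo_shells_summable_rpow_neg_iff (sub_pos.2 hr)
  have hseries : ∀ p : ℝ, 1 < p →
      ((∑' k : ℕ, (s k : ℝ≥0∞) ^ (-(1 / (p - 1)))) ≠ ⊤ ↔ p < r) := fun p hp => by
    rw [ENNReal.tsum_natCast_rpow_ne_top_iff hs, hsum _ (one_div_nonneg.2 (sub_pos.2 hp).le),
      mul_one_div, one_lt_div (sub_pos.2 hp), sub_lt_sub_iff_right]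
  have hmod : ∀ p : ℝ, 1 < p → (0 < Mmod p (fun _ => 1) s ↔ p < r) := fun p hp =>
    (Mmod_one_pos_iff hp hs).trans (hseries p hp)
  refine ⟨s, .inl hs₀, hstep, hseries, hmod, ?_⟩
  rw [show {p : ℝ | 1 < p ∧ 0 < Mmod p (fun _ => 1) s} = Set.Ioo 1 r from
    Set.ext fun p => and_congr_right (hmod p), csSup_Ioo hr]
end

section
/- Let s : {1,2,...} → ℕ satisfy s_k ≥ 1 and let σ : {1,2,...} → ℝ be a weight sequence with α₁ ≤ σ_k ≤ α₂ for all k, for some constants 0 < α₁ ≤ α₂. Then lim_{p→∞} M_p(σ,s)^{1/p} = 0. -/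
open scoped ENNReal NNReal
open Filter

/-- for a bounded, uniformly elliptic weight,
`M_p(σ, s)^{1/p} → 0` as `p → ∞`. -/
theorem stmt19 (s : ℕ → ℕ) (hs : ∀ k, 1 ≤ s k) (σ : ℕ → ℝ≥0)
    (α₁ α₂ : ℝ≥0) (hα₁ : 0 < α₁) (hα : α₁ ≤ α₂)
    (hσ : ∀ k, α₁ ≤ σ k ∧ σ k ≤ α₂) :
    Filter.Tendsto (fun p : ℝ => (Mmod p σ s) ^ (1 / p)) Filter.atTop
      (nhds 0) := by
  rw [ENNReal.tendsto_nhds_zero]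
  intro ε hε
  obtain ⟨n, hn⟩ := ENNReal.exists_inv_nat_lt hε.ne'
  have hn0 : n ≠ 0 := by
    rintro rfl
    simp at hn
  -- the constant
  set C : ℝ≥0∞ := ∑ k ∈ Finset.range n, (s k : ℝ≥0∞) * (σ k : ℝ≥0∞) with hC
  have hCtop : C ≠ ∞ := by
    refine (ENNReal.sum_lt_top.2 fun k _ => ?_).ne
    exact ENNReal.mul_lt_top (ENNReal.natCast_lt_top _) ENNReal.coe_lt_top
  have hC0 : C ≠ 0 := by
    have h0 : (0 : ℕ) ∈ Finset.range n := Finset.mem_range.2 (Nat.pos_of_ne_zero hn0)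
    have : (s 0 : ℝ≥0∞) * (σ 0 : ℝ≥0∞) ≠ 0 := by
      apply mul_ne_zero
      · exact_mod_cast Nat.one_le_iff_ne_zero.mp (hs 0)
      · exact_mod_cast (lt_of_lt_of_le hα₁ (hσ 0).1).ne'
    intro h
    exact this (Finset.sum_eq_zero_iff.mp h 0 h0)
  -- key bound
  have key : ∀ p : ℝ, 0 < p → Mmod p σ s ≤ C * ((n : ℝ≥0∞)⁻¹) ^ p := by
    intro p hp
    set ρ : ℕ → ℝ≥0 := fun k => if k < n then (n : ℝ≥0)⁻¹ else 0 with hρ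
    have hmem : ρ ∈ {ρ : ℕ → ℝ≥0 | 1 ≤ ∑' k : ℕ, (ρ k : ℝ≥0∞)} := by
      show (1 : ℝ≥0∞) ≤ ∑' k : ℕ, (ρ k : ℝ≥0∞)
      have : (∑' k : ℕ, (ρ k : ℝ≥0∞)) = ∑ k ∈ Finset.range n, ((n : ℝ≥0∞))⁻¹ := by
        rw [tsum_eq_sum (s := Finset.range n)]
        · refine Finset.sum_congr rfl fun k hk => ?_
          simp [hρ, Finset.mem_range.mp hk, ENNReal.coe_inv, hn0]
        · intro k hk
          have hkn : ¬ k < n := fun h => hk (Finset.mem_range.2 h)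
          simp [hρ, hkn]
      rw [this, Finset.sum_const, Finset.card_range, nsmul_eq_mul,
        ENNReal.mul_inv_cancel (by exact_mod_cast hn0) (ENNReal.natCast_ne_top _)]
    have hle : Mmod p σ s ≤ ∑' k : ℕ, (s k : ℝ≥0∞) * (σ k : ℝ≥0∞) * (ρ k : ℝ≥0∞) ^ p :=
      iInf₂_le ρ hmem
    refine hle.trans ?_
    have : (∑' k : ℕ, (s k : ℝ≥0∞) * (σ k : ℝ≥0∞) * (ρ k : ℝ≥0∞) ^ p)
        = ∑ k ∈ Finset.range n, (s k : ℝ≥0∞) * (σ k : ℝ≥0∞) * ((n : ℝ≥0∞)⁻¹) ^ p := by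
      rw [tsum_eq_sum (s := Finset.range n)]
      · refine Finset.sum_congr rfl fun k hk => ?_
        simp [hρ, Finset.mem_range.mp hk, ENNReal.coe_inv, hn0]
      · intro k hk
        have hkn : ¬ k < n := fun h => hk (Finset.mem_range.2 h)
        simp [hρ, hkn, ENNReal.zero_rpow_of_pos hp]
    rw [this, ← Finset.sum_mul]
  -- the limiting function
  have htend : Tendsto (fun p : ℝ => C ^ (1 / p) * (n : ℝ≥0∞)⁻¹) atTop
      (nhds ((n : ℝ≥0∞)⁻¹)) := by
    have h1 : Tendsto (fun p : ℝ => C ^ (1 / p)) atTop (nhds 1) := by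
      have hc0 : C.toNNReal ≠ 0 := by
        simp [ENNReal.toNNReal_eq_zero_iff, hC0, hCtop]
      have hc0r : (C.toNNReal : ℝ) ≠ 0 := by exact_mod_cast hc0
      have h0 : Tendsto (fun p : ℝ => 1 / p) atTop (nhds (0 : ℝ)) := by
        simpa [one_div] using tendsto_inv_atTop_zero
      have hreal : Tendsto (fun p : ℝ => ((C.toNNReal : ℝ)) ^ (1 / p)) atTop (nhds 1) := by
        have := (tendsto_const_nhds (x := (C.toNNReal : ℝ)) (f := atTop)).rpow h0
          (Or.inl hc0r)
        simpa using this
      have hnn : Tendsto (fun p : ℝ => (C.toNNReal) ^ (1 / p)) atTop (nhds 1) := by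
        rw [← NNReal.tendsto_coe]
        simpa [NNReal.coe_rpow] using hreal
      have hE := ENNReal.tendsto_coe.2 hnn
      refine (hE.congr fun p => ?_ : _)
      conv_rhs => rw [← ENNReal.coe_toNNReal hCtop]
      rw [ENNReal.coe_rpow_of_ne_zero hc0]
    have := ENNReal.Tendsto.mul_const (b := ((n : ℝ≥0∞))⁻¹) h1 (Or.inl one_ne_zero)
    simpa using this
  have hev : ∀ᶠ p : ℝ in atTop, C ^ (1 / p) * (n : ℝ≥0∞)⁻¹ < ε :=
    htend.eventually_lt_const hn
  filter_upwards [hev, eventually_ge_atTop (1 : ℝ)] with p hp hp1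
  have hp0 : 0 < p := lt_of_lt_of_le one_pos hp1
  have h2 : (Mmod p σ s) ^ (1 / p) ≤ (C * ((n : ℝ≥0∞)⁻¹) ^ p) ^ (1 / p) :=
    ENNReal.rpow_le_rpow (key p hp0) (by positivity)
  have h3 : (C * ((n : ℝ≥0∞)⁻¹) ^ p) ^ (1 / p) = C ^ (1 / p) * (n : ℝ≥0∞)⁻¹ := by
    rw [ENNReal.mul_rpow_of_nonneg _ _ (by positivity), ← ENNReal.rpow_mul,
      mul_one_div, div_self hp0.ne', ENNReal.rpow_one]
  exact le_of_lt (lt_of_le_of_lt (h3 ▸ h2) hp)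
end
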